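/- Let Δ be a traceless self-adjoint operator on n qubits and let Φ be a quantum channel (completely positive trace-preserving map) acting on a single qubit i, extended as Φ ⊗ id on the remaining qubits. Then ‖Φ(Δ)‖_{W₁loc} ≤ ‖Δ‖_{W₁loc}, i.e., the local quantum W₁ norm is contracting under the action of single-qubit quantum channels. -/

import Mathlib

open Matrix BigOperators
open scoped ComplexOrder

noncomputable section

namespace QW1

variable {ι : Type*} [Fintype ι] [DecidableEq ι]

/-- The space of (not necessarily Hermitian) operators on a system of qubits labelled by `ι`:
matrices indexed by the computational basis `ι → Fin 2`. -/
abbrev QMat (ι : Type*) [Fintype ι] [DecidableEq ι] :=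
  Matrix (ι → Fin 2) (ι → Fin 2) ℂ

/-- The operator norm (largest singular value) of a matrix. -/
noncomputable def opNorm {d : Type*} [Fintype d] [DecidableEq d] (A : Matrix d d ℂ) : ℝ :=
  ⨆ i, Real.sqrt ((Matrix.isHermitian_conjTranspose_mul_self A).eigenvalues i)

/-- The trace norm (sum of singular values) of a matrix. -/
noncomputable def traceNorm {d : Type*} [Fintype d] [DecidableEq d] (A : Matrix d d ℂ) : ℝ :=
  ∑ i, Real.sqrt ((Matrix.isHermitian_conjTranspose_mul_self A).eigenvalues i)

/-- Combine an assignment of basis states on `Λ` and on its complement into one on all of `ι`. -/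
def merge (Λ : Finset ι) (f : {x // x ∈ Λ} → Fin 2) (g : {x // x ∉ Λ} → Fin 2) (x : ι) :
    Fin 2 :=
  if h : x ∈ Λ then f ⟨x, h⟩ else g ⟨x, h⟩

/-- The partial trace over the qubits outside `Λ`, `Tr_{Λᶜ}`, yielding an operator on the
qubits in `Λ`. -/
noncomputable def ptrace (Λ : Finset ι) (A : QMat ι) :
    Matrix ({x // x ∈ Λ} → Fin 2) ({x // x ∈ Λ} → Fin 2) ℂ :=
  fun f g => ∑ h : {x : ι // x ∉ Λ} → Fin 2, A (merge Λ f h) (merge Λ g h)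

/-- The extension `M ⊗ I_{Λᶜ}` of an operator `M` on the qubits in `Λ` to all the qubits. -/
def embed (Λ : Finset ι)
    (M : Matrix ({x // x ∈ Λ} → Fin 2) ({x // x ∈ Λ} → Fin 2) ℂ) : QMat ι :=
  fun f g =>
    (if ∀ x : ι, x ∉ Λ → f x = g x then
      M (fun x => f x.1) (fun x => g x.1) else 0)

/-- `H` acts on (at most) the qubits in `Λ`: it has the form `H_Λ ⊗ I_{Λᶜ}` with `H_Λ`
self-adjoint. -/
def ActsOn (Λ : Finset ι) (H : QMat ι) : Prop :=
  ∃ M, M.IsHermitian ∧ H = embed Λ M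

/-- The local quantum norm with penalty coefficients `c`. -/
noncomputable def localNorm (c : ℕ → ℝ) (H : QMat ι) : ℝ :=
  sInf { r : ℝ | ∃ F : Finset ι → QMat ι, (∀ Λ, ActsOn Λ (F Λ)) ∧ H = ∑ Λ, F Λ ∧
    r = 2 * ⨆ x : ι, ∑ Λ ∈ Finset.univ.filter (fun Λ : Finset ι => x ∈ Λ),
      c Λ.card * opNorm (F Λ) }

/-- The local quantum `W₁` norm: the dual of the local quantum norm. -/
noncomputable def W1loc (c : ℕ → ℝ) (Δ : QMat ι) : ℝ :=
  sSup { r : ℝ | ∃ H : QMat ι, H.IsHermitian ∧ localNorm c H ≤ 1 ∧ r = ((Δ * H).trace).re }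

/-- The quantum `W₁` norm of De Palma et al. -/
noncomputable def W1 (Δ : QMat ι) : ℝ :=
  sInf { r : ℝ | ∃ D : ι → QMat ι,
    (∀ x, (D x).IsHermitian ∧ (D x).trace = 0 ∧ ptrace ({x}ᶜ : Finset ι) (D x) = 0) ∧
    Δ = ∑ x, D x ∧ r = (1 / 2) * ∑ x, traceNorm (D x) }

/-- Tensor product of operators on two disjoint families of qubits. -/
def tensor {κ : Type*} [Fintype κ] [DecidableEq κ] (A : QMat ι) (B : QMat κ) :
    QMat (ι ⊕ κ) :=
  fun f g => A (f ∘ Sum.inl) (g ∘ Sum.inl) * B (f ∘ Sum.inr) (g ∘ Sum.inr)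

/-- Tensor product of single-qubit operators, one for each qubit. -/
def tensorAll (B : ι → Matrix (Fin 2) (Fin 2) ℂ) : QMat ι :=
  fun f g => ∏ j, B j (f j) (g j)

/-- The four Pauli matrices `I, X, Y, Z`. -/
noncomputable def pauli : Fin 4 → Matrix (Fin 2) (Fin 2) ℂ :=
  ![1, !![0, 1; 1, 0], !![0, -Complex.I; Complex.I, 0], !![1, 0; 0, -1]]

/-- The Pauli operator `σ_{a 1} ⊗ ⋯ ⊗ σ_{a n}`. -/
noncomputable def pauliOp (a : ι → Fin 4) : QMat ι :=
  tensorAll fun j => pauli (a j)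

/-- The weight (locality) of a Pauli operator: the number of non-identity factors. -/
def weight (a : ι → Fin 4) : ℕ :=
  (Finset.univ.filter fun j => a j ≠ 0).card

/-- A quantum state: a positive semidefinite matrix of unit trace. (`PosSemidef` is taken with
respect to the complex order.) -/
def IsState (ρ : QMat ι) : Prop :=
  ρ.PosSemidef ∧ ρ.trace = 1

end QW1

namespace QW1

variable {ι : Type*} [Fintype ι] [DecidableEq ι]

/-- The dependence `∂_x H` of the observable `H` on the qubit `x`. -/
noncomputable def dep (x : ι) (H : QMat ι) : ℝ :=
  2 * sInf { r : ℝ | ∃ K : QMat ι, ActsOn ({x}ᶜ : Finset ι) K ∧ r = opNorm (H - K) }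

/-- The quantum Lipschitz constant `‖H‖_L = max_x ∂_x H`. -/
noncomputable def lipNorm (H : QMat ι) : ℝ :=
  ⨆ x : ι, dep x H

/-- Single-qubit unitaries rotating the eigenbases of the Paulis `Z`, `X`, `Y`
to the computational basis. -/
noncomputable def ubasis : Fin 3 → Matrix (Fin 2) (Fin 2) ℂ :=
  ![1,
    (Real.sqrt 2 : ℂ)⁻¹ • !![1, 1; 1, -1],
    (Real.sqrt 2 : ℂ)⁻¹ • !![1, -Complex.I; 1, Complex.I]]

/-- The single-qubit classical shadow `3 U† |b⟩⟨b| U − I`. -/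
noncomputable def shadow1 (w : Fin 3) (b : Fin 2) : Matrix (Fin 2) (Fin 2) ℂ :=
  (3 : ℂ) • ((ubasis w)ᴴ * Matrix.single b b 1 * ubasis w) - 1

/-- The classical shadow `⊗_j (3 U_j† |b_j⟩⟨b_j| U_j − I)` of the Pauli measurement
primitive associated with the sampled basis choices and outcomes `s`. -/
noncomputable def shadowOf (s : ι → Fin 3 × Fin 2) : QMat ι :=
  tensorAll fun j => shadow1 (s j).1 (s j).2

/-- The probability of the sample `s` (a uniformly random Pauli basis measured on each qubit,
with outcomes distributed with the Born probability `⟨b|UρU†|b⟩`) when measuring one copy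
of `ρ` in the Pauli measurement primitive. -/
noncomputable def shadowPMF (ρ : QMat ι) (s : ι → Fin 3 × Fin 2) : ℝ :=
  ((3 : ℝ) ^ Fintype.card ι)⁻¹ *
    (((tensorAll fun j => ubasis (s j).1) * ρ * (tensorAll fun j => ubasis (s j).1)ᴴ)
      (fun j => (s j).2) (fun j => (s j).2)).re

open Classical in
/-- The probability that `N` independent classical shadows of `ρ` (from the Pauli
measurement primitive) satisfy the event `E`. -/
noncomputable def shadowProb (ρ : QMat ι) (N : ℕ)
    (E : (Fin N → ι → Fin 3 × Fin 2) → Prop) : ℝ :=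
  ∑ ω : Fin N → ι → Fin 3 × Fin 2, if E ω then ∏ i, shadowPMF ρ (ω i) else 0

/-- Extension of a single-qubit operator `K` on the qubit `i`, acting as the identity on the
remaining qubits. -/
noncomputable def oneSite (i : ι) (K : Matrix (Fin 2) (Fin 2) ℂ) : QMat ι :=
  tensorAll fun j => if j = i then K else 1

/-- Logarithm of a Hermitian matrix via its spectral decomposition (junk value otherwise). -/
noncomputable def mlog {d : Type*} [Fintype d] [DecidableEq d] (A : Matrix d d ℂ) :
    Matrix d d ℂ :=
  if hA : A.IsHermitian then
    (hA.eigenvectorUnitary : Matrix d d ℂ) *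
      Matrix.diagonal (fun i => (Real.log (hA.eigenvalues i) : ℂ)) *
      star (hA.eigenvectorUnitary : Matrix d d ℂ)
  else 0

/-- The quantum relative entropy `S(ρ‖σ) = Tr[ρ(ln ρ − ln σ)]`. -/
noncomputable def relEnt (ρ σ : QMat ι) : ℝ :=
  ((ρ * (mlog ρ - mlog σ)).trace).re

/-- The Gibbs state `e^{−H} / Tr e^{−H}`. -/
noncomputable def gibbs (H : QMat ι) : QMat ι :=
  ((NormedSpace.exp (-H)).trace)⁻¹ • NormedSpace.exp (-H)

end QW1

/-!
By duality, `Tr[Φ(Δ) H] = Tr[Δ Φ†(H)]` for the unital dual map `Φ†(X) = ∑ⱼ Kⱼ† X Kⱼ`, so it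
suffices that `Φ†` maps the unit ball of `‖·‖_loc` into itself. Applied term by term to a
decomposition `H = ∑_Λ H_Λ`, it gives a decomposition of `Φ†(H)` of no larger cost:
`Φ†(H_Λ)` still acts on `Λ` (if `i ∈ Λ` the Kraus operators act inside `Λ`; otherwise they
commute with `H_Λ` and `∑ⱼ Kⱼ† Kⱼ = 1`), and a unital positive map does not increase the
operator norm of a self-adjoint operator. Tracelessness of `Δ` makes the supremum finite: the
scalar term `H_∅` is invisible to `Δ`, and every other term has operator norm at most `1`.
-/

section CStarAlgebra

variable {A : Type*} [CStarAlgebra A] [PartialOrder A] [StarOrderedRing A]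

lemma IsSelfAdjoint.norm_le_of_neg_le_of_le {a : A} (ha : IsSelfAdjoint a) {r : ℝ} (hr : 0 ≤ r)
    (h₁ : -algebraMap ℝ A r ≤ a) (h₂ : a ≤ algebraMap ℝ A r) : ‖a‖ ≤ r := by
  obtain _ | _ := subsingleton_or_nontrivial A
  · simp [Subsingleton.elim a 0, hr]
  rw [← map_neg] at h₁
  rcases CStarAlgebra.norm_or_neg_norm_mem_spectrum ha with h | h
  · exact (le_algebraMap_iff_spectrum_le ha).mp h₂ _ h
  · linarith [(algebraMap_le_iff_le_spectrum ha).mp h₁ _ h]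

lemma norm_sum_star_mul_mul_le {κ : Type*} (s : Finset κ) (k : κ → A)
    (hk : ∑ j ∈ s, star (k j) * k j = 1) {b : A} (hb : IsSelfAdjoint b) :
    ‖∑ j ∈ s, star (k j) * b * k j‖ ≤ ‖b‖ := by
  have conj_scalar (t : ℝ) :
      ∑ j ∈ s, star (k j) * algebraMap ℝ A t * k j = algebraMap ℝ A t := by
    simp_rw [← Algebra.commutes, mul_assoc, ← Finset.mul_sum, hk, mul_one]
  refine (isSelfAdjoint_sum s fun j _ => hb.conjugate' _).norm_le_of_neg_le_of_le
    (norm_nonneg b) ?_ ?_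
  · rw [← map_neg, ← conj_scalar]
    exact Finset.sum_le_sum fun j _ =>
      star_left_conjugate_le_conjugate (by simpa using hb.neg_algebraMap_norm_le_self) _
  · rw [← conj_scalar]
    exact Finset.sum_le_sum fun j _ =>
      star_left_conjugate_le_conjugate hb.le_algebraMap_norm_self _

end CStarAlgebra

namespace QW1

open Matrix
open scoped Kronecker

section KrausDual

variable {κ d : Type*} [Fintype κ] [Fintype d] [DecidableEq d]

def krausDual (A : κ → Matrix d d ℂ) : Matrix d d ℂ →+ Matrix d d ℂ where
  toFun X := ∑ j, (A j)ᴴ * X * A j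
  map_zero' := by simp
  map_add' X Y := by simp only [mul_add, add_mul, Finset.sum_add_distrib]

lemma krausDual_apply (A : κ → Matrix d d ℂ) (X : Matrix d d ℂ) :
    krausDual A X = ∑ j, (A j)ᴴ * X * A j :=
  rfl

lemma isHermitian_krausDual (A : κ → Matrix d d ℂ) {X : Matrix d d ℂ} (hX : X.IsHermitian) :
    (krausDual A X).IsHermitian :=
  isSelfAdjoint_sum _ fun j _ => isHermitian_conjTranspose_mul_mul (A j) hX

lemma trace_mul_krausDual (A : κ → Matrix d d ℂ) (Δ X : Matrix d d ℂ) :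
    (Δ * krausDual A X).trace = ((∑ j, A j * Δ * (A j)ᴴ) * X).trace := by
  simp only [krausDual_apply, Finset.mul_sum, Finset.sum_mul, trace_sum]
  refine Finset.sum_congr rfl fun j _ => ?_
  rw [← Matrix.mul_assoc, ← Matrix.mul_assoc, trace_mul_cycle]
  simp only [Matrix.mul_assoc]

end KrausDual

section OperatorNorm

open scoped Matrix.Norms.L2Operator MatrixOrder

variable {d : Type*} [Fintype d] [DecidableEq d]

lemma opNorm_eq_norm (A : Matrix d d ℂ) : opNorm A = ‖A‖ := by
  cases isEmpty_or_nonempty d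
  · simp [opNorm, Subsingleton.elim A 0]
  have hP := isHermitian_conjTranspose_mul_self A
  have hnorm : ‖A‖ = √‖Aᴴ * A‖ := by
    rw [l2_opNorm_conjTranspose_mul_self, Real.sqrt_mul_self (norm_nonneg A)]
  obtain ⟨p, hp⟩ : ‖Aᴴ * A‖ ∈ Set.range hP.eigenvalues := by
    rw [← hP.spectrum_real_eq_range_eigenvalues]
    exact CStarAlgebra.norm_mem_spectrum_of_nonneg (posSemidef_conjTranspose_mul_self A).nonneg
  rw [hnorm, opNorm]
  refine le_antisymm (ciSup_le fun q => Real.sqrt_le_sqrt ?_) ?_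
  · exact (Real.le_norm_self _).trans
      (spectrum.norm_le_norm_of_mem (hP.eigenvalues_mem_spectrum_real q))
  · rw [← hp]
    exact le_ciSup (f := fun q => √(hP.eigenvalues q)) (Set.finite_range _).bddAbove p

lemma opNorm_nonneg (A : Matrix d d ℂ) : 0 ≤ opNorm A :=
  opNorm_eq_norm A ▸ norm_nonneg A

lemma opNorm_zero : opNorm (0 : Matrix d d ℂ) = 0 := by
  rw [opNorm_eq_norm, norm_zero]

lemma exists_norm_trace_mul_le (Δ : Matrix d d ℂ) :
    ∃ C, 0 ≤ C ∧ ∀ F : Matrix d d ℂ, ‖(Δ * F).trace‖ ≤ C * opNorm F := by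
  let ℓ : Matrix d d ℂ →L[ℂ] ℂ :=
    LinearMap.toContinuousLinearMap (traceLinearMap d ℂ ℂ ∘ₗ LinearMap.mulLeft ℂ Δ)
  exact ⟨‖ℓ‖, norm_nonneg _, fun F => opNorm_eq_norm F ▸ ℓ.le_opNorm F⟩

lemma opNorm_krausDual_le {κ : Type*} [Fintype κ] {A : κ → Matrix d d ℂ}
    (hA : ∑ j, (A j)ᴴ * A j = 1) {X : Matrix d d ℂ} (hX : X.IsHermitian) :
    opNorm (krausDual A X) ≤ opNorm X := by
  rw [opNorm_eq_norm, opNorm_eq_norm]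
  exact norm_sum_star_mul_mul_le Finset.univ A hA hX

end OperatorNorm

section Locality

variable {ι : Type*} [Fintype ι] [DecidableEq ι]

abbrev splitEquiv (Λ : Finset ι) :
    (ι → Fin 2) ≃ ({x // x ∈ Λ} → Fin 2) × ({x // x ∉ Λ} → Fin 2) :=
  Equiv.piEquivPiSubtypeProd (· ∈ Λ) fun _ => Fin 2

lemma embed_eq_kronecker (Λ : Finset ι) (M : QMat Λ) :
    embed Λ M =
      (M ⊗ₖ (1 : QMat {x // x ∉ Λ})).submatrix (splitEquiv Λ) (splitEquiv Λ) := by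
  ext f g
  simp [embed, kroneckerMap_apply, one_apply, funext_iff]

lemma embed_mul (Λ : Finset ι) (M N : QMat Λ) : embed Λ M * embed Λ N = embed Λ (M * N) := by
  rw [embed_eq_kronecker, embed_eq_kronecker, embed_eq_kronecker, submatrix_mul_equiv,
    ← mul_kronecker_mul, mul_one]

lemma embed_conjTranspose (Λ : Finset ι) (M : QMat Λ) : (embed Λ M)ᴴ = embed Λ Mᴴ := by
  rw [embed_eq_kronecker, embed_eq_kronecker, conjTranspose_submatrix, conjTranspose_kronecker,
    conjTranspose_one]

lemma embed_sum {κ : Type*} [Fintype κ] (Λ : Finset ι) (M : κ → QMat Λ) :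
    ∑ j, embed Λ (M j) = embed Λ (∑ j, M j) := by
  ext f g
  simp only [Matrix.sum_apply, embed]
  split_ifs <;> simp

lemma embed_empty (M : QMat (∅ : Finset ι)) (e : (∅ : Finset ι) → Fin 2) :
    embed ∅ M = M e e • (1 : QMat ι) := by
  ext f g
  simp [embed, one_apply, funext_iff, Subsingleton.elim _ e]

lemma tensorAll_one : tensorAll (fun _ => 1 : ι → Matrix (Fin 2) (Fin 2) ℂ) = 1 := by
  ext f g
  simp [tensorAll, one_apply, Finset.prod_ite_zero, funext_iff]

lemma tensorAll_eq_kronecker (Λ : Finset ι) (B : ι → Matrix (Fin 2) (Fin 2) ℂ) :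
    tensorAll B = (tensorAll (fun x : {x // x ∈ Λ} => B x) ⊗ₖ
      tensorAll (fun x : {x // x ∉ Λ} => B x)).submatrix (splitEquiv Λ) (splitEquiv Λ) := by
  ext f g
  simp only [tensorAll, submatrix_apply, kroneckerMap_apply]
  convert (Fintype.prod_subtype_mul_prod_subtype (· ∈ Λ) fun j => B j (f j) (g j)).symm <;> rfl

lemma oneSite_eq_kronecker (i : ι) (K : Matrix (Fin 2) (Fin 2) ℂ) :
    oneSite i K = (K ⊗ₖ (1 : QMat {j // j ≠ i})).submatrix
      (Equiv.piSplitAt i fun _ => Fin 2) (Equiv.piSplitAt i fun _ => Fin 2) := by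
  ext f g
  rw [submatrix_apply, kroneckerMap_apply, ← tensorAll_one, oneSite, tensorAll,
    Fintype.prod_eq_mul_prod_subtype_ne _ i, if_pos rfl]
  congr 1
  exact Finset.prod_congr rfl fun j _ => by rw [if_neg j.2]; rfl

lemma oneSite_eq_embed {i : ι} {Λ : Finset ι} (h : i ∈ Λ) (K : Matrix (Fin 2) (Fin 2) ℂ) :
    oneSite i K = embed Λ (oneSite ⟨i, h⟩ K) := by
  rw [oneSite, tensorAll_eq_kronecker Λ, embed_eq_kronecker, oneSite]
  congr
  · ext x; simp [Subtype.ext_iff]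
  · exact (congrArg tensorAll (funext fun x => if_neg fun hx => x.2 (hx ▸ h))).trans
      tensorAll_one

lemma oneSite_eq_one_kronecker {i : ι} {Λ : Finset ι} (h : i ∉ Λ)
    (K : Matrix (Fin 2) (Fin 2) ℂ) :
    oneSite i K =
      ((1 : QMat Λ) ⊗ₖ oneSite ⟨i, h⟩ K).submatrix (splitEquiv Λ) (splitEquiv Λ) := by
  rw [oneSite, tensorAll_eq_kronecker Λ, oneSite]
  congr
  · exact (congrArg tensorAll (funext fun x : Λ =>
      if_neg fun hx : x.1 = i => h (hx ▸ x.2))).trans tensorAll_one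
  · ext x; simp [Subtype.ext_iff]

lemma embed_commute_oneSite {i : ι} {Λ : Finset ι} (h : i ∉ Λ) (M : QMat Λ)
    (K : Matrix (Fin 2) (Fin 2) ℂ) : Commute (embed Λ M) (oneSite i K) := by
  rw [Commute, SemiconjBy, embed_eq_kronecker, oneSite_eq_one_kronecker h, submatrix_mul_equiv,
    submatrix_mul_equiv, ← mul_kronecker_mul, ← mul_kronecker_mul, one_mul, one_mul, mul_one,
    mul_one]

lemma sum_conjTranspose_oneSite_mul_oneSite {κ : Type*} [Fintype κ] (i : ι)
    {K : κ → Matrix (Fin 2) (Fin 2) ℂ} (hK : ∑ j, (K j)ᴴ * K j = 1) :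
    ∑ j, (oneSite i (K j))ᴴ * oneSite i (K j) = (1 : QMat ι) := by
  simp only [oneSite_eq_kronecker, conjTranspose_submatrix, conjTranspose_kronecker,
    conjTranspose_one, submatrix_mul_equiv, ← mul_kronecker_mul, mul_one]
  rw [← submatrix_one_equiv (Equiv.piSplitAt i fun _ => Fin 2), ← one_kronecker_one, ← hK]
  ext f g
  simp [Matrix.sum_apply, kroneckerMap_apply, Finset.sum_mul]

lemma actsOn_zero (Λ : Finset ι) : ActsOn Λ (0 : QMat ι) :=
  ⟨0, isHermitian_zero, by ext f g; simp [embed]⟩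

lemma actsOn_univ {H : QMat ι} (hH : H.IsHermitian) : ActsOn Finset.univ H :=
  ⟨fun a b => H (fun x => a ⟨x, Finset.mem_univ x⟩) (fun x => b ⟨x, Finset.mem_univ x⟩),
    by ext a b; exact congrFun (congrFun hH.eq _) _, by ext f g; simp [embed]⟩

lemma ActsOn.isHermitian {Λ : Finset ι} {X : QMat ι} (hX : ActsOn Λ X) : X.IsHermitian := by
  obtain ⟨M, hM, rfl⟩ := hX
  rw [IsHermitian, embed_conjTranspose, hM.eq]

lemma ActsOn.trace_mul_eq_zero {X : QMat ι} (hX : ActsOn ∅ X) {Δ : QMat ι}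
    (hΔ : Δ.trace = 0) : (Δ * X).trace = 0 := by
  obtain ⟨M, -, rfl⟩ := hX
  rw [embed_empty M fun x => absurd x.2 (Finset.notMem_empty x.1), Matrix.mul_smul,
    Matrix.mul_one, trace_smul, hΔ, smul_zero]

lemma ActsOn.krausDual_oneSite {κ : Type*} [Fintype κ] {i : ι}
    {K : κ → Matrix (Fin 2) (Fin 2) ℂ} (hK : ∑ j, (K j)ᴴ * K j = 1) {Λ : Finset ι}
    {X : QMat ι} (hX : ActsOn Λ X) : ActsOn Λ (krausDual (fun j => oneSite i (K j)) X) := by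
  obtain ⟨M, hM, rfl⟩ := hX
  by_cases hi : i ∈ Λ
  · refine ⟨krausDual (fun j => oneSite ⟨i, hi⟩ (K j)) M, isHermitian_krausDual _ hM, ?_⟩
    simp only [krausDual_apply, oneSite_eq_embed hi, embed_conjTranspose, embed_mul, embed_sum]
  · have hcomm (j : κ) : (oneSite i (K j))ᴴ * embed Λ M * oneSite i (K j)
        = (oneSite i (K j))ᴴ * oneSite i (K j) * embed Λ M := by
      rw [Matrix.mul_assoc, (embed_commute_oneSite hi M (K j)).eq, Matrix.mul_assoc]
    rw [krausDual_apply, Finset.sum_congr rfl fun j _ => hcomm j, ← Finset.sum_mul,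
      sum_conjTranspose_oneSite_mul_oneSite i hK, Matrix.one_mul]
    exact ⟨M, hM, rfl⟩

end Locality

section LocalNorm

variable {ι : Type*} [Fintype ι] [DecidableEq ι]

def localCost (c : ℕ → ℝ) (F : Finset ι → QMat ι) : ℝ :=
  2 * ⨆ x : ι, ∑ Λ ∈ Finset.univ.filter (fun Λ : Finset ι => x ∈ Λ),
    c Λ.card * opNorm (F Λ)

def IsLocalDecomposition (H : QMat ι) (F : Finset ι → QMat ι) : Prop :=
  (∀ Λ, ActsOn Λ (F Λ)) ∧ H = ∑ Λ, F Λ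

lemma localNorm_eq (c : ℕ → ℝ) (H : QMat ι) :
    localNorm c H = sInf (localCost c '' {F | IsLocalDecomposition H F}) := by
  rw [localNorm]
  congr 1
  ext r
  simp [localCost, IsLocalDecomposition, and_assoc, eq_comm]

lemma W1loc_eq (c : ℕ → ℝ) (Δ : QMat ι) :
    W1loc c Δ =
      sSup ((fun H => ((Δ * H).trace).re) '' {H | H.IsHermitian ∧ localNorm c H ≤ 1}) := by
  rw [W1loc]
  congr 1
  ext r
  simp [and_assoc, eq_comm]

lemma isLocalDecomposition_univ {H : QMat ι} (hH : H.IsHermitian) :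
    IsLocalDecomposition H fun Λ => if Λ = Finset.univ then H else 0 := by
  refine ⟨fun Λ => ?_, by simp⟩
  dsimp only
  split_ifs with hΛ
  · exact hΛ ▸ actsOn_univ hH
  · exact actsOn_zero Λ

variable {c : ℕ → ℝ}

lemma localCost_nonneg (hc : ∀ Λ : Finset ι, Λ.Nonempty → 0 ≤ c Λ.card)
    (F : Finset ι → QMat ι) : 0 ≤ localCost c F :=
  mul_nonneg zero_le_two <| Real.iSup_nonneg fun x => Finset.sum_nonneg fun Λ hΛ =>
    mul_nonneg (hc Λ ⟨x, (Finset.mem_filter.mp hΛ).2⟩) (opNorm_nonneg _)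

lemma bddBelow_localCost_image (hc : ∀ Λ : Finset ι, Λ.Nonempty → 0 ≤ c Λ.card)
    (S : Set (Finset ι → QMat ι)) : BddBelow (localCost c '' S) :=
  ⟨0, Set.forall_mem_image.mpr fun F _ => localCost_nonneg hc F⟩

lemma localCost_mono (hc : ∀ Λ : Finset ι, Λ.Nonempty → 0 ≤ c Λ.card)
    {F G : Finset ι → QMat ι} (h : ∀ Λ, opNorm (G Λ) ≤ opNorm (F Λ)) :
    localCost c G ≤ localCost c F := by
  refine mul_le_mul_of_nonneg_left (ciSup_mono (Set.finite_range _).bddAbove fun x => ?_)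
    zero_le_two
  exact Finset.sum_le_sum fun Λ hΛ =>
    mul_le_mul_of_nonneg_left (h Λ) (hc Λ ⟨x, (Finset.mem_filter.mp hΛ).2⟩)

lemma two_mul_opNorm_le_localCost (hc : ∀ Λ : Finset ι, Λ.Nonempty → 1 ≤ c Λ.card)
    (F : Finset ι → QMat ι) {Λ : Finset ι} {x : ι} (hx : x ∈ Λ) :
    2 * opNorm (F Λ) ≤ localCost c F := by
  have hterm : opNorm (F Λ) ≤ c Λ.card * opNorm (F Λ) :=
    le_mul_of_one_le_left (opNorm_nonneg _) (hc Λ ⟨x, hx⟩)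
  refine mul_le_mul_of_nonneg_left (hterm.trans ?_) zero_le_two
  refine le_trans ?_ (le_ciSup (Set.finite_range _).bddAbove x)
  exact Finset.single_le_sum (f := fun Λ => c Λ.card * opNorm (F Λ))
    (fun Λ' hΛ' => mul_nonneg (zero_le_one.trans (hc Λ' ⟨x, (Finset.mem_filter.mp hΛ').2⟩))
      (opNorm_nonneg _)) (Finset.mem_filter.mpr ⟨Finset.mem_univ Λ, hx⟩)

lemma localNorm_zero (hc : ∀ Λ : Finset ι, Λ.Nonempty → 0 ≤ c Λ.card) :
    localNorm c (0 : QMat ι) = 0 := by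
  have hmem : (0 : ℝ) ∈ localCost c '' {F | IsLocalDecomposition (0 : QMat ι) F} :=
    ⟨fun _ => 0, ⟨actsOn_zero, by simp⟩, by simp [localCost, opNorm_zero]⟩
  rw [localNorm_eq]
  exact le_antisymm (csInf_le (bddBelow_localCost_image hc _) hmem)
    (le_csInf ⟨0, hmem⟩ (Set.forall_mem_image.mpr fun F _ => localCost_nonneg hc F))

lemma localNorm_map_le (hc : ∀ Λ : Finset ι, Λ.Nonempty → 0 ≤ c Λ.card)
    (Φ : QMat ι →+ QMat ι) (hact : ∀ Λ X, ActsOn Λ X → ActsOn Λ (Φ X))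
    (hnorm : ∀ X : QMat ι, X.IsHermitian → opNorm (Φ X) ≤ opNorm X)
    {H : QMat ι} (hH : H.IsHermitian) : localNorm c (Φ H) ≤ localNorm c H := by
  rw [localNorm_eq, localNorm_eq]
  refine le_csInf ⟨_, Set.mem_image_of_mem (localCost c) (isLocalDecomposition_univ hH)⟩
    (Set.forall_mem_image.mpr fun F ⟨hF, hHF⟩ => ?_)
  have hdec : IsLocalDecomposition (Φ H) (Φ ∘ F) :=
    ⟨fun Λ => hact Λ _ (hF Λ), by rw [hHF, map_sum]; rfl⟩
  exact (csInf_le (bddBelow_localCost_image hc _) (Set.mem_image_of_mem _ hdec)).trans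
    (localCost_mono hc fun Λ => hnorm _ (hF Λ).isHermitian)

lemma exists_isLocalDecomposition_opNorm_le_one
    (hc : ∀ Λ : Finset ι, Λ.Nonempty → 1 ≤ c Λ.card) {H : QMat ι} (hH : H.IsHermitian)
    (hHc : localNorm c H ≤ 1) :
    ∃ F, IsLocalDecomposition H F ∧
      ∀ Λ : Finset ι, Λ.Nonempty → opNorm (F Λ) ≤ 1 := by
  rw [localNorm_eq] at hHc
  obtain ⟨_, ⟨F, hF, rfl⟩, hlt⟩ := exists_lt_of_csInf_lt
    ⟨_, Set.mem_image_of_mem (localCost c) (isLocalDecomposition_univ hH)⟩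
    (hHc.trans_lt one_lt_two)
  exact ⟨F, hF, fun Λ ⟨x, hx⟩ => by linarith [two_mul_opNorm_le_localCost hc F hx]⟩

lemma bddAbove_W1loc_set (hc : ∀ Λ : Finset ι, Λ.Nonempty → 1 ≤ c Λ.card) {Δ : QMat ι}
    (hΔ : Δ.trace = 0) :
    BddAbove ((fun H => ((Δ * H).trace).re) '' {H | H.IsHermitian ∧ localNorm c H ≤ 1}) := by
  obtain ⟨C, hC, hΔC⟩ := exists_norm_trace_mul_le Δ
  refine ⟨∑ _Λ : Finset ι, C, Set.forall_mem_image.mpr fun H ⟨hH, hHc⟩ => ?_⟩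
  obtain ⟨F, ⟨hF, rfl⟩, hF1⟩ := exists_isLocalDecomposition_opNorm_le_one hc hH hHc
  have hterm (Λ : Finset ι) : ((Δ * F Λ).trace).re ≤ C := by
    obtain rfl | hΛ := Λ.eq_empty_or_nonempty
    · rw [(hF ∅).trace_mul_eq_zero hΔ, Complex.zero_re]
      exact hC
    · calc ((Δ * F Λ).trace).re ≤ C * opNorm (F Λ) := (Complex.re_le_norm _).trans (hΔC _)
        _ ≤ C := mul_le_of_le_one_right hC (hF1 Λ hΛ)
  calc ((Δ * ∑ Λ, F Λ).trace).re = ∑ Λ, ((Δ * F Λ).trace).re := by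
        rw [Finset.mul_sum, trace_sum, Complex.re_sum]
    _ ≤ ∑ _Λ : Finset ι, C := Finset.sum_le_sum fun Λ _ => hterm Λ

end LocalNorm

end QW1

open QW1 Matrix Complex

theorem stmt8_general {n m : ℕ} (c : ℕ → ℝ) (hc1 : c 1 = 1)
    (hcmono : ∀ k l, 1 ≤ k → k ≤ l → l ≤ n → c k ≤ c l)
    (Δ : QMat (Fin n)) (hΔtr : Δ.trace = 0)
    (i : Fin n) (K : Fin m → Matrix (Fin 2) (Fin 2) ℂ)
    (hK : ∑ j, (K j)ᴴ * K j = 1) :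
    W1loc c (∑ j, oneSite i (K j) * Δ * (oneSite i (K j))ᴴ) ≤ W1loc c Δ := by
  have hc : ∀ Λ : Finset (Fin n), Λ.Nonempty → 1 ≤ c Λ.card := fun Λ hΛ =>
    hc1 ▸ hcmono 1 _ le_rfl hΛ.card_pos (card_finset_fin_le Λ)
  have hc0 : ∀ Λ : Finset (Fin n), Λ.Nonempty → 0 ≤ c Λ.card := fun Λ hΛ =>
    zero_le_one.trans (hc Λ hΛ)
  rw [W1loc_eq, W1loc_eq]
  refine csSup_le_csSup (bddAbove_W1loc_set hc hΔtr)
    ⟨0, 0, ⟨isHermitian_zero, by rw [localNorm_zero hc0]; exact zero_le_one⟩, by simp⟩ ?_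
  rintro _ ⟨H, ⟨hH, hHc⟩, rfl⟩
  refine ⟨krausDual (fun j => oneSite i (K j)) H, ⟨isHermitian_krausDual _ hH, ?_⟩,
    congrArg Complex.re (trace_mul_krausDual _ Δ H)⟩
  exact (localNorm_map_le hc0 _ (fun _ _ hX => hX.krausDual_oneSite hK)
    (fun _ hX => opNorm_krausDual_le (sum_conjTranspose_oneSite_mul_oneSite i hK) hX) hH).trans hHc

/-- The local quantum `W₁` norm is contracting with respect to the action of
single-qubit quantum channels (given in Kraus form, acting on the qubit `i`). -/
theorem stmt8 {n m : ℕ} (c : ℕ → ℝ) (hc1 : c 1 = 1)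
    (hcmono : ∀ k l, 1 ≤ k → k ≤ l → l ≤ n → c k ≤ c l)
    (Δ : QMat (Fin n)) (hΔ : Δ.IsHermitian) (hΔtr : Δ.trace = 0)
    (i : Fin n) (K : Fin m → Matrix (Fin 2) (Fin 2) ℂ)
    (hK : ∑ j, (K j)ᴴ * K j = 1) :
    W1loc c (∑ j, oneSite i (K j) * Δ * (oneSite i (K j))ᴴ) ≤ W1loc c Δ :=
  stmt8_general c hc1 hcmono Δ hΔtr i K hK
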